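/- arXiv:1611.00267 — 3 statements merged into one kernel-verified Lean document; each statement's English description precedes it below -/
import Mathlib

section
/- Let n ≥ 1 and let P ∈ ℂ[z] be a polynomial of degree n all of whose roots lie in the open unit disk, whose leading coefficient is a positive real number, and which satisfies (1/(2π)) ∫_{−π}^{π} |P(e^{iθ})|^{−2} dθ = 1. Then P is an n-th orthonormal polynomial with respect to the weight w(θ) := (2π |P(e^{iθ})|²)^{−1}; that is, ∫_{−π}^{π} P(e^{iθ}) e^{−ijθ} w(θ) dθ = 0 for every integer j with 0 ≤ j ≤ n−1, and ∫_{−π}^{π} |P(e^{iθ})|² w(θ) dθ = 1. -/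
open MeasureTheory

def IsOrthonormalOPUC (w : ℝ → ℝ) (n : ℕ) (φ : Polynomial ℂ) : Prop :=
  φ.natDegree = n ∧ 0 < φ.leadingCoeff.re ∧ φ.leadingCoeff.im = 0 ∧
    (∀ j : ℕ, j < n →
      (∫ θ in (-Real.pi)..Real.pi,
        φ.eval (Complex.exp (Complex.I * θ)) * Complex.exp (-Complex.I * j * θ) * (w θ : ℂ)) = 0) ∧
    (∫ θ in (-Real.pi)..Real.pi, ‖φ.eval (Complex.exp (Complex.I * θ))‖ ^ 2 * w θ) = 1

/-!
On the unit circle `|P|² = P · conj P` and `conj P(z) = z⁻ⁿ P*(z)`, where `P*` is the reversed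
polynomial, so against the weight `(2π|P|²)⁻¹` the moment `P(z) z⁻ʲ` becomes
`z · z^(n-1-j) / (2π P*(z))`. The zeros of `P*` are the reflections `1 / conj a` of the zeros `a`
of `P`, so they lie outside the closed unit disk, and the moment vanishes by Cauchy's theorem.
The normalization is immediate, since `|P|²` times the weight is the constant `1/(2π)`.
-/

open Complex Polynomial Real
open scoped ComplexConjugate

theorem DiffContOnCl.integral_exp_smul_comp_exp_eq_zero {E : Type*} [NormedAddCommGroup E]
    [NormedSpace ℂ E] {f : ℂ → E} (hf : DiffContOnCl ℂ f (Metric.ball 0 1)) :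
    ∫ θ in (-π)..π, exp (I * θ) • f (exp (I * θ)) = 0 := by
  have hper : Function.Periodic (fun θ : ℝ => exp (I * θ) • f (exp (I * θ))) (2 * π) := by
    intro θ
    simp only [ofReal_add, ofReal_mul, ofReal_ofNat, mul_add,
      show I * (2 * π) = 2 * π * I by ring, exp_periodic _]
  have hcircle := hf.circleIntegral_eq_zero zero_le_one
  simp only [circleIntegral, deriv_circleMap, circleMap_zero, ofReal_one, one_mul,
    mul_comm _ I, mul_smul, intervalIntegral.integral_smul] at hcircle
  rw [← zero_add (2 * π), hper.intervalIntegral_add_eq 0 (-π), show -π + 2 * π = π by ring]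
    at hcircle
  exact (smul_eq_zero.1 hcircle).resolve_left I_ne_zero

namespace Polynomial

theorem eval_ne_zero_of_one_le_norm {P : ℂ[X]} (hP : P ≠ 0)
    (hroots : ∀ z ∈ P.roots, ‖z‖ < 1) {z : ℂ} (hz : 1 ≤ ‖z‖) : P.eval z ≠ 0 :=
  fun h => (hroots z ((mem_roots hP).2 h)).not_ge hz

/-- The reversed polynomial `P*(z) = zⁿ conj P(1 / conj z)`, `n = deg P`. -/
noncomputable def conjReverse (P : ℂ[X]) : ℂ[X] := (P.map (starRingEnd ℂ)).reverse

theorem eval_conjReverse (P : ℂ[X]) {z : ℂ} (hz : z ≠ 0) :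
    P.conjReverse.eval z = z ^ P.natDegree * conj (P.eval (conj z)⁻¹) := by
  have : Invertible z⁻¹ := invertibleOfNonzero (inv_ne_zero hz)
  have h := eval₂_reverse_mul_pow (RingHom.id ℂ) z⁻¹ (P.map (starRingEnd ℂ))
  rw [invOf_eq_inv, inv_inv, natDegree_map_eq_of_injective (RingHom.injective _), eval₂_id,
    eval₂_id] at h
  rw [conjReverse, ← mul_inv_cancel_left₀ (pow_ne_zero P.natDegree hz) (eval z _), ← inv_pow,
    mul_comm _ (eval z _), h, ← eval_map_apply, map_inv₀, conj_conj]

theorem eval_conjReverse_of_norm_eq_one (P : ℂ[X]) {z : ℂ} (hz : ‖z‖ = 1) :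
    P.conjReverse.eval z = z ^ P.natDegree * conj (P.eval z) := by
  rw [eval_conjReverse P (norm_ne_zero_iff.1 (hz ▸ one_ne_zero)), ← inv_eq_conj hz, inv_inv]

theorem eval_conjReverse_ne_zero {P : ℂ[X]} (hP : P ≠ 0)
    (hroots : ∀ z ∈ P.roots, ‖z‖ < 1) {z : ℂ} (hz : ‖z‖ ≤ 1) :
    P.conjReverse.eval z ≠ 0 := by
  rcases eq_or_ne z 0 with rfl | hz0
  · rw [← coeff_zero_eq_eval_zero, conjReverse, coeff_zero_reverse,
      leadingCoeff_map_of_injective (RingHom.injective _), _root_.map_ne_zero]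
    exact leadingCoeff_ne_zero.2 hP
  · rw [eval_conjReverse P hz0]
    refine mul_ne_zero (pow_ne_zero _ hz0) ((_root_.map_ne_zero _).2 ?_)
    refine eval_ne_zero_of_one_le_norm hP hroots ?_
    rw [norm_inv, RCLike.norm_conj]
    exact one_le_inv₀ (norm_pos_iff.2 hz0) |>.2 hz

theorem diffContOnCl_pow_div_eval_conjReverse {P : ℂ[X]} (hP : P ≠ 0)
    (hroots : ∀ z ∈ P.roots, ‖z‖ < 1) (k : ℕ) :
    DiffContOnCl ℂ (fun w => w ^ k / P.conjReverse.eval w) (Metric.ball 0 1) := by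
  refine DifferentiableOn.diffContOnCl ?_
  rw [closure_ball 0 one_ne_zero]
  exact (differentiable_pow k).differentiableOn.div P.conjReverse.differentiable.differentiableOn
    fun w hw => eval_conjReverse_ne_zero hP hroots (mem_closedBall_zero_iff.1 hw)

theorem eval_mul_inv_pow_mul_weight (P : ℂ[X]) {z : ℂ} (hz : ‖z‖ = 1) (hPz : P.eval z ≠ 0)
    {j k : ℕ} (hjk : j + k + 1 = P.natDegree) :
    P.eval z * (z ^ j)⁻¹ * (((2 * π * ‖P.eval z‖ ^ 2)⁻¹ : ℝ) : ℂ) =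
      (2 * π : ℂ)⁻¹ * (z * (z ^ k / P.conjReverse.eval z)) := by
  have hz0 : z ≠ 0 := norm_ne_zero_iff.1 (hz ▸ one_ne_zero)
  have hconj : conj (P.eval z) ≠ 0 := (_root_.map_ne_zero _).2 hPz
  rw [eval_conjReverse_of_norm_eq_one P hz, ← hjk]
  push_cast
  rw [← mul_conj']
  field_simp
  ring

end Polynomial

theorem bernstein_szego_orthonormal_general (n : ℕ) (P : Polynomial ℂ)
    (hdeg : P.natDegree = n)
    (hroots : ∀ z ∈ P.roots, ‖z‖ < 1)
    (hlead : 0 < P.leadingCoeff.re ∧ P.leadingCoeff.im = 0) :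
    IsOrthonormalOPUC
      (fun θ : ℝ => (2 * Real.pi * ‖P.eval (Complex.exp (Complex.I * θ))‖ ^ 2)⁻¹) n P := by
  have hP : P ≠ 0 := by rintro rfl; simp at hlead
  have hPz (θ : ℝ) : P.eval (exp (I * θ)) ≠ 0 :=
    eval_ne_zero_of_one_le_norm hP hroots (norm_exp_I_mul_ofReal θ).ge
  refine ⟨hdeg, hlead.1, hlead.2, fun j hj => ?_, ?_⟩
  · obtain ⟨k, hjk⟩ : ∃ k, j + k + 1 = P.natDegree := ⟨n - j - 1, by omega⟩
    calc _ = ∫ θ in (-π)..π, (2 * π : ℂ)⁻¹ *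
          (exp (I * θ) • (exp (I * θ) ^ k / P.conjReverse.eval (exp (I * θ)))) :=
          intervalIntegral.integral_congr fun θ _ => by
            have hexp : exp (-I * j * θ) = (exp (I * θ) ^ j)⁻¹ := by
              rw [← Complex.exp_nat_mul, ← Complex.exp_neg]; ring_nf
            rw [smul_eq_mul, hexp,
              ← P.eval_mul_inv_pow_mul_weight (norm_exp_I_mul_ofReal θ) (hPz θ) hjk]
      _ = 0 := by
        rw [intervalIntegral.integral_const_mul,
          (diffContOnCl_pow_div_eval_conjReverse hP hroots k).integral_exp_smul_comp_exp_eq_zero,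
          mul_zero]
  · calc _ = ∫ _ in (-π)..π, (2 * π)⁻¹ :=
          intervalIntegral.integral_congr fun θ _ => by
            field_simp [hPz θ]
      _ = 1 := by
        rw [intervalIntegral.integral_const, smul_eq_mul]
        field_simp
        ring

/-- If `P` has degree `n ≥ 1`, all its roots in the open unit disk, positive real leading
coefficient, and `(1/(2π)) ∫_{-π}^{π} |P(e^{iθ})|^{-2} dθ = 1`, then `P` is an `n`-th
orthonormal polynomial with respect to the weight `w(θ) = (2π |P(e^{iθ})|²)⁻¹`. -/
theorem bernstein_szego_orthonormal (n : ℕ) (hn : 1 ≤ n) (P : Polynomial ℂ)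
    (hdeg : P.natDegree = n)
    (hroots : ∀ z ∈ P.roots, ‖z‖ < 1)
    (hlead : 0 < P.leadingCoeff.re ∧ P.leadingCoeff.im = 0)
    (hnorm : (1 / (2 * Real.pi)) *
        ∫ θ in (-Real.pi)..Real.pi, (‖P.eval (Complex.exp (Complex.I * θ))‖ ^ 2)⁻¹ = 1) :
    IsOrthonormalOPUC
      (fun θ : ℝ => (2 * Real.pi * ‖P.eval (Complex.exp (Complex.I * θ))‖ ^ 2)⁻¹) n P :=
  bernstein_szego_orthonormal_general n P hdeg hroots hlead
end

section
/- Fix ε ∈ (0,1) and δ ∈ (0,π). Then h_n(θ) converges to 2(1 − e^{iθ})^ε uniformly on the set {θ : δ ≤ |θ| ≤ π}, and 2/h_n(θ) converges to (1 − e^{iθ})^{−ε} uniformly on the same set; that is, for every η > 0 there exists N such that for all n ≥ N and all θ with δ ≤ |θ| ≤ π, |h_n(θ) − 2(1 − e^{iθ})^ε| < η and |2/h_n(θ) − (1 − e^{iθ})^{−ε}| < η. -/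
/-!
The Fejér kernel is nonnegative, has unit mass on `[-π, π]` (it is the average of the first `n`
Dirichlet kernels, each of mass `2π`), and is at most `1 / (2πn sin² (ρ/2))` off `[-ρ, ρ]`.
Hence the Fejér means `∫ 𝓕_n(x) g(θ - x) dx` of a continuous `g` converge to `g` uniformly on
compact sets, and for `g θ = (1 - e^{iθ})^ε` these means are `h_n / 2`. On `{δ ≤ |θ| ≤ π}` the
limit is continuous and nonvanishing, hence bounded away from `0` by compactness, and uniform
convergence passes to reciprocals.
-/

open MeasureTheory

/-- The Fejér kernel of degree `n`. -/
noncomputable def fejer (n : ℕ) (θ : ℝ) : ℝ :=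
  (1 / (2 * Real.pi * n)) * (Real.sin (n * θ / 2) / Real.sin (θ / 2)) ^ 2

/-- `h_n(θ) := 2 ((1 - e^{i·})^ε ∗ 𝓕_n)(θ)`, where `(1 - e^{iθ})^ε` is the principal branch
(`Complex.cpow`, which vanishes at `θ ∈ 2πℤ` since `ε ≠ 0`). -/
noncomputable def hAux (ε : ℝ) (n : ℕ) (θ : ℝ) : ℂ :=
  2 * ∫ x in (-Real.pi)..Real.pi,
    (1 - Complex.exp (Complex.I * (θ - x))) ^ (ε : ℂ) * (fejer n x : ℂ)

open Real Set Filter Finset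
open scoped Interval

noncomputable def dirichletKernel (j : ℕ) (x : ℝ) : ℝ :=
  1 + 2 * ∑ k ∈ range j, cos ((k + 1 : ℕ) * x)

@[fun_prop]
theorem continuous_dirichletKernel (j : ℕ) : Continuous (dirichletKernel j) := by
  unfold dirichletKernel
  fun_prop

theorem one_sub_cos_mul_dirichletKernel (j : ℕ) (x : ℝ) :
    (1 - cos x) * dirichletKernel j x = cos (j * x) - cos ((j + 1 : ℕ) * x) := by
  induction j with
  | zero => simp [dirichletKernel]
  | succ j ih =>
    have hsucc : dirichletKernel (j + 1) x = dirichletKernel j x + 2 * cos ((j + 1 : ℕ) * x) := by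
      simp only [dirichletKernel, sum_range_succ]
      ring
    have h₁ : ((j + 1 + 1 : ℕ) : ℝ) * x = (j + 1 : ℕ) * x + x := by push_cast; ring
    have h₂ : (j : ℝ) * x = (j + 1 : ℕ) * x - x := by push_cast; ring
    rw [hsucc, mul_add, ih, h₁, cos_add, h₂, cos_sub]
    ring

theorem sum_dirichletKernel_mul_one_sub_cos (n : ℕ) (x : ℝ) :
    (∑ j ∈ range n, dirichletKernel j x) * (1 - cos x) = 1 - cos (n * x) := by
  simp_rw [sum_mul, mul_comm _ (1 - cos x), one_sub_cos_mul_dirichletKernel]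
  simpa using sum_range_sub' (fun j : ℕ => cos (j * x)) n

theorem fejer_eq_sum_dirichletKernel (n : ℕ) {x : ℝ} (hx : sin (x / 2) ≠ 0) :
    fejer n x = (∑ j ∈ range n, dirichletKernel j x) / (2 * π * n) := by
  have half_sq : ∀ y : ℝ, 2 * sin (y / 2) ^ 2 = 1 - cos y := fun y => by
    rw [sin_sq_eq_half_sub]; ring_nf
  have hsum : ∑ j ∈ range n, dirichletKernel j x = sin (n * x / 2) ^ 2 / sin (x / 2) ^ 2 := by
    rw [eq_div_iff (pow_ne_zero 2 hx)]
    have := sum_dirichletKernel_mul_one_sub_cos n x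
    rw [← half_sq, ← half_sq] at this
    linarith
  rw [fejer, div_pow, ← hsum]
  ring

theorem integral_cos_nat_mul {m : ℕ} (hm : m ≠ 0) : ∫ x in (-π)..π, cos (m * x) = 0 := by
  rw [intervalIntegral.integral_comp_mul_left cos (Nat.cast_ne_zero.2 hm), integral_cos,
    mul_neg, sin_neg, sin_nat_mul_pi]
  simp

theorem integral_dirichletKernel (j : ℕ) : ∫ x in (-π)..π, dirichletKernel j x = 2 * π := by
  have hcos : ∀ k : ℕ, IntervalIntegrable (fun x => cos ((k + 1 : ℕ) * x)) volume (-π) π :=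
    fun k => (by fun_prop : Continuous _).intervalIntegrable _ _
  have hsum : Continuous fun x => ∑ k ∈ range j, cos ((k + 1 : ℕ) * x) := by fun_prop
  unfold dirichletKernel
  rw [intervalIntegral.integral_add intervalIntegrable_const
      ((hsum.intervalIntegrable _ _).const_mul 2),
    intervalIntegral.integral_const_mul, intervalIntegral.integral_finsetSum fun k _ => hcos k,
    sum_eq_zero fun k _ => integral_cos_nat_mul k.succ_ne_zero]
  simp
  ring

theorem fejer_nonneg (n : ℕ) (x : ℝ) : 0 ≤ fejer n x := by
  unfold fejer
  positivity

/-- Only almost everywhere: `fejer n 0 = 0` because `0 / 0 = 0`. -/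
theorem fejer_ae_eq_sum_dirichletKernel (n : ℕ) :
    fejer n =ᵐ[volume.restrict (Ι (-π) π)]
      fun x => (∑ j ∈ range n, dirichletKernel j x) / (2 * π * n) := by
  rw [EventuallyEq, ae_restrict_iff' measurableSet_uIoc]
  filter_upwards [Measure.ae_ne volume 0] with x hx0 hx
  rw [uIoc_of_le (by linarith [pi_pos])] at hx
  refine fejer_eq_sum_dirichletKernel n fun h => hx0 ?_
  rw [sin_eq_zero_iff_of_lt_of_lt (by linarith [hx.1, pi_pos]) (by linarith [hx.2, pi_pos])] at h
  linarith

theorem intervalIntegrable_fejer (n : ℕ) : IntervalIntegrable (fejer n) volume (-π) π :=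
  ((by fun_prop : Continuous fun x => (∑ j ∈ range n, dirichletKernel j x) / (2 * π * n))
    |>.intervalIntegrable _ _).congr_ae (fejer_ae_eq_sum_dirichletKernel n).symm

theorem integral_fejer {n : ℕ} (hn : n ≠ 0) : ∫ x in (-π)..π, fejer n x = 1 := by
  rw [intervalIntegral.integral_congr_ae_restrict (fejer_ae_eq_sum_dirichletKernel n),
    intervalIntegral.integral_div, intervalIntegral.integral_finsetSum fun j _ =>
      (continuous_dirichletKernel j).intervalIntegrable _ _]
  simp [integral_dirichletKernel]
  field_simp

theorem fejer_le_of_le_abs (n : ℕ) {ρ x : ℝ} (hρ : 0 < ρ) (hρx : ρ ≤ |x|) (hx : |x| ≤ π) :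
    fejer n x ≤ 1 / (2 * π * n * sin (ρ / 2) ^ 2) := by
  have hsρ : 0 < sin (ρ / 2) := sin_pos_of_pos_of_lt_pi (by linarith) (by linarith)
  have hsin : sin (ρ / 2) ^ 2 ≤ sin (x / 2) ^ 2 := by
    have habs : sin (|x| / 2) ^ 2 = sin (x / 2) ^ 2 := by
      rcases abs_choice x with h | h <;> simp [h, neg_div, sin_neg]
    rw [← habs]
    gcongr
    exact sin_le_sin_of_le_of_le_pi_div_two (by linarith [pi_pos]) (by linarith) (by linarith)
  calc fejer n x = 1 / (2 * π * n) * (sin (n * x / 2) ^ 2 / sin (x / 2) ^ 2) := by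
        rw [fejer, div_pow]
    _ ≤ 1 / (2 * π * n) * (1 / sin (ρ / 2) ^ 2) := by
        gcongr
        exact sin_sq_le_one _
    _ = 1 / (2 * π * n * sin (ρ / 2) ^ 2) := by rw [one_div_mul_one_div]

section FejerMean

variable {E : Type*} [NormedAddCommGroup E] [NormedSpace ℝ E] [CompleteSpace E]

theorem norm_integral_fejer_smul_sub_le {g : ℝ → E} (hg : ContinuousOn g (Icc (-π) π))
    {n : ℕ} (hn : n ≠ 0) {ρ η M : ℝ} (hρ : 0 < ρ) (hρπ : ρ ≤ π)
    (hnear : ∀ x, |x| ≤ ρ → ‖g x - g 0‖ ≤ η) (hfar : ∀ x ∈ Icc (-π) π, ‖g x - g 0‖ ≤ M) :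
    ‖(∫ x in (-π)..π, fejer n x • g x) - g 0‖ ≤ η + M / sin (ρ / 2) ^ 2 / n := by
  have hπ := pi_pos
  set C := 1 / (2 * π * n * sin (ρ / 2) ^ 2) with hC_def
  have hη : 0 ≤ η := (norm_nonneg _).trans (hnear 0 (by simpa using hρ.le))
  have hM : 0 ≤ M := (norm_nonneg _).trans (hfar 0 ⟨by linarith, by linarith⟩)
  have hC : 0 ≤ C := by positivity
  have hpoint : ∀ x ∈ Ioc (-π) π, ‖fejer n x • (g x - g 0)‖ ≤ η * fejer n x + M * C := by
    intro x hx
    have habs : |x| ≤ π := abs_le.2 ⟨hx.1.le, hx.2⟩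
    have hK := fejer_nonneg n x
    rw [norm_smul, Real.norm_of_nonneg hK]
    rcases le_or_gt |x| ρ with hxρ | hxρ
    · nlinarith [hnear x hxρ]
    · have hgx := hfar x (abs_le.1 habs)
      nlinarith [fejer_le_of_le_abs n hρ hxρ.le habs, norm_nonneg (g x - g 0)]
  have hKg : IntervalIntegrable (fun x => fejer n x • g x) volume (-π) π :=
    (intervalIntegrable_fejer n).smul_continuousOn (by rwa [Set.uIcc_of_le (by linarith)])
  have hcenter : (∫ x in (-π)..π, fejer n x • g x) - g 0
      = ∫ x in (-π)..π, fejer n x • (g x - g 0) := by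
    simp_rw [smul_sub]
    rw [intervalIntegral.integral_sub hKg
        ((intervalIntegrable_fejer n).smul_continuousOn continuousOn_const),
      intervalIntegral.integral_smul_const, integral_fejer hn, one_smul]
  rw [hcenter]
  calc _ ≤ ∫ x in (-π)..π, (η * fejer n x + M * C) :=
        intervalIntegral.norm_integral_le_of_norm_le (by linarith) (ae_of_all _ hpoint)
          (((intervalIntegrable_fejer n).const_mul η).add intervalIntegrable_const)
    _ = η + M / sin (ρ / 2) ^ 2 / n := by
        rw [intervalIntegral.integral_add ((intervalIntegrable_fejer n).const_mul η)
            intervalIntegrable_const, intervalIntegral.integral_const_mul, integral_fejer hn,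
          intervalIntegral.integral_const, smul_eq_mul, hC_def]
        field_simp
        ring

theorem tendstoUniformlyOn_integral_fejer_smul {g : ℝ → E} (hg : Continuous g) {s : Set ℝ}
    (hs : IsCompact s) :
    TendstoUniformlyOn (fun n θ => ∫ x in (-π)..π, fejer n x • g (θ - x)) g atTop s := by
  have hπ := pi_pos
  set t := Metric.cthickening π s
  have ht : IsCompact t := hs.cthickening
  have hmem : ∀ θ ∈ s, ∀ x, |x| ≤ π → θ - x ∈ t := fun θ hθ x hx =>
    Metric.mem_cthickening_of_dist_le _ θ _ _ hθ (by simpa [Real.dist_eq] using hx)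
  obtain ⟨M, hM⟩ := ht.exists_bound_of_continuousOn hg.continuousOn
  rw [Metric.tendstoUniformlyOn_iff]
  intro η hη
  obtain ⟨ρ, hρ, hgρ⟩ := Metric.uniformContinuousOn_iff.1
    (ht.uniformContinuousOn_of_continuous hg.continuousOn) (η / 2) (half_pos hη)
  set r := min (ρ / 2) π
  have hr : 0 < r := lt_min (half_pos hρ) hπ
  have hrπ : r ≤ π := min_le_right _ _
  have hrρ : r < ρ := (min_le_left _ _).trans_lt (half_lt_self hρ)
  have htail : ∀ᶠ n : ℕ in atTop, 2 * M / sin (r / 2) ^ 2 / n < η / 2 :=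
    (tendsto_const_div_atTop_nhds_zero_nat _).eventually (gt_mem_nhds (half_pos hη))
  filter_upwards [htail, eventually_ne_atTop 0] with n hn hn0 θ hθ
  have hθt : θ ∈ t := by simpa using hmem θ hθ 0 (by simp [hπ.le])
  have hnear : ∀ x, |x| ≤ r → ‖g (θ - x) - g (θ - 0)‖ ≤ η / 2 := fun x hx => by
    rw [sub_zero, ← dist_eq_norm]
    refine (hgρ _ (hmem θ hθ x (hx.trans hrπ)) _ hθt ?_).le
    simpa [Real.dist_eq] using hx.trans_lt hrρ
  have hfar : ∀ x ∈ Icc (-π) π, ‖g (θ - x) - g (θ - 0)‖ ≤ 2 * M := fun x hx => by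
    rw [sub_zero]
    linarith [norm_sub_le (g (θ - x)) (g θ), hM _ (hmem θ hθ x (abs_le.2 hx)), hM θ hθt]
  rw [dist_comm, dist_eq_norm]
  calc _ ≤ η / 2 + 2 * M / sin (r / 2) ^ 2 / n := by
        simpa using norm_integral_fejer_smul_sub_le (g := fun x => g (θ - x))
          (by fun_prop) hn0 hr hrπ hnear hfar
    _ < η := by linarith

end FejerMean

theorem TendstoUniformlyOn.inv₀_of_le_norm {ι α 𝕜 : Type*} [NormedDivisionRing 𝕜]
    {F : ι → α → 𝕜} {f : α → 𝕜} {l : Filter ι} {s : Set α} {c : ℝ}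
    (hF : TendstoUniformlyOn F f l s) (hc : 0 < c) (hf : ∀ x ∈ s, c ≤ ‖f x‖) :
    TendstoUniformlyOn (fun i x => (F i x)⁻¹) (fun x => (f x)⁻¹) l s := by
  rw [Metric.tendstoUniformlyOn_iff] at hF ⊢
  intro η hη
  filter_upwards [hF (min (c / 2) (η * c ^ 2 / 2)) (by positivity)] with i hi x hx
  have hclose := hi x hx
  rw [dist_eq_norm, lt_min_iff] at hclose
  have hfx := hf x hx
  have hFx : c / 2 ≤ ‖F i x‖ := by linarith [norm_sub_norm_le (f x) (F i x)]
  rw [dist_eq_norm, inv_sub_inv' (norm_pos_iff.1 (by linarith)) (norm_pos_iff.1 (by linarith)),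
    norm_mul, norm_mul, norm_inv, norm_inv, norm_sub_rev]
  calc ‖f x‖⁻¹ * ‖f x - F i x‖ * ‖F i x‖⁻¹ ≤ c⁻¹ * ‖f x - F i x‖ * (c / 2)⁻¹ := by gcongr
    _ < c⁻¹ * (η * c ^ 2 / 2) * (c / 2)⁻¹ := by gcongr; exact hclose.2
    _ = η := by field_simp

open Complex in
theorem continuous_one_sub_exp_mul_I_cpow {ε : ℂ} (hε : 0 < ε.re) :
    Continuous fun θ : ℝ => (1 - exp (I * θ)) ^ ε := by
  refine continuous_iff_continuousAt.2 fun θ =>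
    (continuousAt_cpow_const_of_re_pos (Or.inl ?_) hε).comp
      (by fun_prop : Continuous fun θ : ℝ => 1 - exp (I * θ)).continuousAt
  simpa [mul_comm I, exp_ofReal_mul_I_re] using cos_le_one θ

open Complex in
theorem one_sub_exp_mul_I_ne_zero {θ : ℝ} (h0 : θ ≠ 0) (hθ : |θ| < 2 * π) :
    1 - exp (I * θ) ≠ 0 := by
  intro h
  have hcos : Real.cos θ = 1 := by
    have := congrArg re h
    simp only [sub_re, one_re, mul_comm I, exp_ofReal_mul_I_re, zero_re] at this
    linarith
  exact h0 ((Real.cos_eq_one_iff_of_lt_of_lt (abs_lt.1 hθ).1 (abs_lt.1 hθ).2).1 hcos)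

theorem hAux_eq_two_mul_integral_fejer_smul (ε : ℝ) (n : ℕ) (θ : ℝ) :
    hAux ε n θ = 2 * ∫ x in (-π)..π,
      fejer n x • (1 - Complex.exp (Complex.I * ↑(θ - x))) ^ (ε : ℂ) := by
  simp only [hAux, Complex.real_smul, mul_comm (fejer n _ : ℂ), Complex.ofReal_sub]

/-- For fixed `ε ∈ (0,1)` and `δ ∈ (0,π)`, `h_n(θ) → 2(1-e^{iθ})^ε` and
`2/h_n(θ) → (1-e^{iθ})^{-ε}` uniformly on `{θ : δ ≤ |θ| ≤ π}`. -/
theorem hAux_uniform_convergence (ε : ℝ) (hε : ε ∈ Set.Ioo (0 : ℝ) 1)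
    (δ : ℝ) (hδ : δ ∈ Set.Ioo (0 : ℝ) Real.pi) :
    ∀ η : ℝ, 0 < η → ∃ N : ℕ, ∀ n : ℕ, N ≤ n → ∀ θ : ℝ, δ ≤ |θ| → |θ| ≤ Real.pi →
      ‖hAux ε n θ - 2 * (1 - Complex.exp (Complex.I * θ)) ^ (ε : ℂ)‖ < η ∧
      ‖2 / hAux ε n θ - (1 - Complex.exp (Complex.I * θ)) ^ (-(ε : ℂ))‖ < η := by
  set F : ℝ → ℂ := fun θ => (1 - Complex.exp (Complex.I * θ)) ^ (ε : ℂ)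
  have hF : Continuous F := continuous_one_sub_exp_mul_I_cpow (by simpa using hε.1)
  set S := {θ : ℝ | δ ≤ |θ|} ∩ Icc (-π) π
  have hS : IsCompact S := isCompact_Icc.inter_left (isClosed_le continuous_const continuous_abs)
  have hFS : ∀ θ ∈ S, 0 < ‖F θ‖ := fun θ ⟨hδθ, hθπ⟩ => by
    have hθ0 : θ ≠ 0 := fun h => by simp [h] at hδθ; linarith [hδ.1]
    refine norm_pos_iff.2 (Complex.cpow_ne_zero_iff.2 (Or.inl ?_))
    exact one_sub_exp_mul_I_ne_zero hθ0 (by linarith [abs_le.2 hθπ, pi_pos])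
  obtain ⟨c, hc, hcF⟩ := hS.exists_forall_le' hF.norm.continuousOn hFS
  have hconv := tendstoUniformlyOn_integral_fejer_smul hF hS
  have hinv := hconv.inv₀_of_le_norm hc hcF
  intro η hη
  rw [Metric.tendstoUniformlyOn_iff] at hconv hinv
  obtain ⟨N, hN⟩ := eventually_atTop.1 ((hconv (η / 2) (half_pos hη)).and (hinv η hη))
  refine ⟨N, fun n hn θ hδθ hθπ => ?_⟩
  have hθ : θ ∈ S := ⟨hδθ, abs_le.1 hθπ⟩
  obtain ⟨hclose, hclose_inv⟩ := hN n hn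
  rw [Complex.cpow_neg, hAux_eq_two_mul_integral_fejer_smul]
  constructor
  · rw [← mul_sub, norm_mul, Complex.norm_two, ← dist_eq_norm, dist_comm]
    linarith [hclose θ hθ]
  · rw [div_mul_cancel_left₀ two_ne_zero, ← dist_eq_norm, dist_comm]
    exact hclose_inv θ hθ
end

section
/- There is an absolute constant C > 0 such that for every ε ∈ (0,1) and every θ ∈ [−π,π] with θ ≠ 0: | Re (1 − e^{iθ})^ε − |θ|^ε cos(επ/2) | ≤ C ε |θ|^{1+ε} and | Im (1 − e^{iθ})^ε | ≤ C ε |θ|^ε. -/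
/-!
For `0 < θ ≤ π` we have `1 - e^{iθ} = 2 sin(θ/2) e^{i(θ-π)/2}` with argument in `(-π/2, 0]`, so
the principal power is `(2 sin(θ/2))^ε e^{iε(θ-π)/2}`. Bernoulli's inequality and
`θ - 2 sin(θ/2) = O(θ³)` give `θ^ε - (2 sin(θ/2))^ε = O(ε θ^{1+ε})`, and the angle `ε(θ-π)/2`
is within `εθ/2` of `-επ/2`; this yields the real part, while the imaginary part is at most
`θ^ε · επ/2`. Negative `θ` reduce to positive ones by conjugation, as `1 - e^{iθ}` never lies on
the negative real axis.
-/

open Real ComplexConjugate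

theorem rpow_sub_rpow_le_mul_div {r t ε : ℝ} (hr : 0 < r) (ht : 0 ≤ t) (hε₀ : 0 ≤ ε)
    (hε₁ : ε ≤ 1) : t ^ ε - r ^ ε ≤ ε * r ^ ε * ((t - r) / r) := by
  have hs : -1 ≤ (t - r) / r := by
    rw [le_div_iff₀ hr]; linarith
  have ht' : t = r * (1 + (t - r) / r) := by field_simp; ring
  calc t ^ ε - r ^ ε = r ^ ε * (1 + (t - r) / r) ^ ε - r ^ ε := by
        rw [← mul_rpow hr.le (by linarith), ← ht']
    _ ≤ r ^ ε * (1 + ε * ((t - r) / r)) - r ^ ε := by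
        gcongr
        exact rpow_one_add_le_one_add_mul_self hs hε₀ hε₁
    _ = ε * r ^ ε * ((t - r) / r) := by ring

theorem two_mul_sin_half_le {θ : ℝ} (h : 0 ≤ θ) : 2 * sin (θ / 2) ≤ θ := by
  linarith [sin_le (x := θ / 2) (by linarith)]

theorem two_mul_sin_half_pos {θ : ℝ} (h₀ : 0 < θ) (h2π : θ < 2 * π) : 0 < 2 * sin (θ / 2) := by
  have := sin_pos_of_pos_of_lt_pi (x := θ / 2) (by linarith) (by linarith)
  positivity

theorem sub_two_mul_sin_half_le_mul {θ : ℝ} (h₀ : 0 ≤ θ) (hπ : θ ≤ π) :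
    θ - 2 * sin (θ / 2) ≤ θ * (2 * sin (θ / 2)) := by
  have hcube : θ - θ ^ 3 / 24 ≤ 2 * sin (θ / 2) := by
    linarith [sin_ge_sub_cube (x := θ / 2) (by linarith)]
  have hlow : θ / 4 ≤ sin (θ / 2) :=
    calc θ / 4 ≤ θ / π := div_le_div_of_nonneg_left h₀ pi_pos pi_le_four
      _ = 2 / π * (θ / 2) := by ring
      _ ≤ sin (θ / 2) := mul_le_sin (by linarith) (by linarith)
  have hθ : θ ≤ 12 := by linarith [pi_le_four]
  nlinarith [mul_le_mul_of_nonneg_left hlow h₀, mul_nonneg (sq_nonneg θ) (sub_nonneg.mpr hθ)]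

theorem abs_mul_cos_sub_mul_cos_le {ρ t a b : ℝ} (hρ : 0 ≤ ρ) (hρt : ρ ≤ t) :
    |ρ * cos a - t * cos b| ≤ (t - ρ) + t * |a - b| := by
  calc |ρ * cos a - t * cos b| = |(t - ρ) * (-cos a) + t * (cos a - cos b)| := by ring_nf
    _ ≤ |(t - ρ) * (-cos a)| + |t * (cos a - cos b)| := abs_add_le _ _
    _ ≤ (t - ρ) + t * |a - b| := by
        rw [abs_mul, abs_mul, abs_neg, abs_of_nonneg (by linarith : 0 ≤ t - ρ),
          abs_of_nonneg (by linarith : 0 ≤ t)]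
        exact add_le_add (mul_le_of_le_one_right (by linarith) (abs_cos_le_one a))
          (mul_le_mul_of_nonneg_left (abs_cos_sub_cos_le a b) (by linarith))

theorem one_sub_exp_I_mul_eq_two_sin_mul_exp (θ : ℝ) :
    1 - Complex.exp (Complex.I * θ) =
      ↑(2 * sin (θ / 2)) * Complex.exp (↑((θ - π) / 2) * Complex.I) := by
  obtain ⟨x, rfl⟩ : ∃ x, θ = 2 * x := ⟨θ / 2, by ring⟩
  rw [show (2 * x - π) / 2 = x - π / 2 by ring, mul_div_cancel_left₀ x two_ne_zero, mul_comm]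
  apply Complex.ext <;>
    simp only [Complex.sub_re, Complex.sub_im, Complex.one_re, Complex.one_im,
      Complex.re_ofReal_mul, Complex.im_ofReal_mul, Complex.exp_ofReal_mul_I_re,
      Complex.exp_ofReal_mul_I_im, cos_sub_pi_div_two, sin_sub_pi_div_two, cos_two_mul,
      sin_two_mul, cos_sq'] <;>
    ring

theorem cpow_ofReal_mul_exp_mul_I {r φ : ℝ} (hr : 0 < r) (hφ : φ ∈ Set.Ioc (-π) π) (ε : ℝ) :
    (↑r * Complex.exp (↑φ * Complex.I)) ^ (ε : ℂ) =
      ↑(r ^ ε) * Complex.exp (↑(ε * φ) * Complex.I) := by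
  have hr' : (r : ℂ) ≠ 0 := Complex.ofReal_ne_zero.mpr hr.ne'
  rw [Complex.cpow_def_of_ne_zero (mul_ne_zero hr' (Complex.exp_ne_zero _)),
    Complex.log_ofReal_mul hr (Complex.exp_ne_zero _),
    Complex.log_exp (by simpa using hφ.1) (by simpa using hφ.2), add_mul, Complex.exp_add,
    Complex.ofReal_cpow hr.le, Complex.cpow_def_of_ne_zero hr', Complex.ofReal_log hr.le]
  push_cast
  ring_nf

theorem one_sub_exp_I_mul_cpow {θ : ℝ} (h₀ : 0 < θ) (h2π : θ < 2 * π) (ε : ℝ) :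
    (1 - Complex.exp (Complex.I * θ)) ^ (ε : ℂ) =
      ↑((2 * sin (θ / 2)) ^ ε) * Complex.exp (↑(ε * ((θ - π) / 2)) * Complex.I) := by
  rw [one_sub_exp_I_mul_eq_two_sin_mul_exp,
    cpow_ofReal_mul_exp_mul_I (two_mul_sin_half_pos h₀ h2π) ⟨by linarith, by linarith [pi_pos]⟩]

theorem one_sub_exp_I_mul_neg_cpow (θ ε : ℝ) :
    (1 - Complex.exp (Complex.I * ↑(-θ))) ^ (ε : ℂ) =
      conj ((1 - Complex.exp (Complex.I * θ)) ^ (ε : ℂ)) := by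
  have harg : (1 - Complex.exp (Complex.I * θ)).arg ≠ π := by
    intro h
    have hre := (Complex.arg_eq_pi_iff.mp h).1
    rw [mul_comm, Complex.sub_re, Complex.one_re, Complex.exp_ofReal_mul_I_re] at hre
    linarith [cos_le_one θ]
  rw [← Complex.conj_ofReal ε, ← Complex.conj_cpow _ _ harg, map_sub, map_one,
    ← Complex.exp_conj]
  simp

theorem abs_re_one_sub_exp_I_mul_cpow_sub_le {θ ε : ℝ} (h₀ : 0 < θ) (hπ : θ ≤ π) (hε₀ : 0 ≤ ε)
    (hε₁ : ε ≤ 1) :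
    |((1 - Complex.exp (Complex.I * θ)) ^ (ε : ℂ)).re - θ ^ ε * cos (ε * π / 2)| ≤
      2 * ε * θ ^ (1 + ε) := by
  have h2π : θ < 2 * π := by linarith [pi_pos]
  set r := 2 * sin (θ / 2)
  have hr : 0 < r := two_mul_sin_half_pos h₀ h2π
  have hrθ : r ≤ θ := two_mul_sin_half_le h₀.le
  have hrε : r ^ ε ≤ θ ^ ε := rpow_le_rpow hr.le hrθ hε₀
  have hmod : θ ^ ε - r ^ ε ≤ ε * θ ^ ε * θ :=
    calc θ ^ ε - r ^ ε ≤ ε * r ^ ε * ((θ - r) / r) := rpow_sub_rpow_le_mul_div hr h₀.le hε₀ hε₁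
      _ ≤ ε * θ ^ ε * θ :=
          mul_le_mul (by gcongr) ((div_le_iff₀ hr).mpr (sub_two_mul_sin_half_le_mul h₀.le hπ))
            (div_nonneg (sub_nonneg.mpr hrθ) hr.le) (by positivity)
  rw [one_sub_exp_I_mul_cpow h₀ h2π, Complex.re_ofReal_mul, Complex.exp_ofReal_mul_I_re,
    ← cos_neg (ε * π / 2)]
  calc _ ≤ (θ ^ ε - r ^ ε) + θ ^ ε * |ε * ((θ - π) / 2) - -(ε * π / 2)| :=
        abs_mul_cos_sub_mul_cos_le (by positivity) hrε
    _ = (θ ^ ε - r ^ ε) + ε * θ ^ ε * θ / 2 := by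
        rw [show ε * ((θ - π) / 2) - -(ε * π / 2) = ε * θ / 2 by ring,
          abs_of_nonneg (by positivity)]
        ring
    _ ≤ 2 * ε * θ ^ (1 + ε) := by
        rw [rpow_add h₀, rpow_one]
        nlinarith [mul_nonneg (mul_nonneg hε₀ (rpow_nonneg h₀.le ε)) h₀.le]

theorem abs_im_one_sub_exp_I_mul_cpow_le {θ ε : ℝ} (h₀ : 0 < θ) (hπ : θ ≤ π) (hε₀ : 0 ≤ ε) :
    |((1 - Complex.exp (Complex.I * θ)) ^ (ε : ℂ)).im| ≤ 2 * ε * θ ^ ε := by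
  have h2π : θ < 2 * π := by linarith [pi_pos]
  have hsin : |sin (ε * ((θ - π) / 2))| ≤ 2 * ε := by
    refine abs_sin_le_abs.trans ?_
    rw [abs_mul, abs_of_nonneg hε₀, abs_of_nonpos (by linarith)]
    nlinarith [pi_le_four]
  rw [one_sub_exp_I_mul_cpow h₀ h2π, Complex.im_ofReal_mul, Complex.exp_ofReal_mul_I_im, abs_mul,
    abs_of_nonneg (rpow_nonneg (two_mul_sin_half_pos h₀ h2π).le ε)]
  calc _ ≤ θ ^ ε * (2 * ε) :=
        mul_le_mul (rpow_le_rpow (two_mul_sin_half_pos h₀ h2π).le (two_mul_sin_half_le h₀.le) hε₀)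
          hsin (abs_nonneg _) (rpow_nonneg h₀.le ε)
    _ = 2 * ε * θ ^ ε := by ring

theorem re_one_sub_exp_I_mul_abs_cpow (θ ε : ℝ) :
    ((1 - Complex.exp (Complex.I * ↑|θ|)) ^ (ε : ℂ)).re =
      ((1 - Complex.exp (Complex.I * θ)) ^ (ε : ℂ)).re := by
  rcases abs_choice θ with h | h <;> rw [h]
  rw [one_sub_exp_I_mul_neg_cpow, Complex.conj_re]

theorem abs_im_one_sub_exp_I_mul_abs_cpow (θ ε : ℝ) :
    |((1 - Complex.exp (Complex.I * ↑|θ|)) ^ (ε : ℂ)).im| =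
      |((1 - Complex.exp (Complex.I * θ)) ^ (ε : ℂ)).im| := by
  rcases abs_choice θ with h | h <;> rw [h]
  rw [one_sub_exp_I_mul_neg_cpow, Complex.conj_im, abs_neg]

/-- There is an absolute constant `C > 0` such that for all `ε ∈ (0,1)` and
`θ ∈ [-π,π] \ {0}`, `|Re (1-e^{iθ})^ε - |θ|^ε cos(επ/2)| ≤ C ε |θ|^{1+ε}` and
`|Im (1-e^{iθ})^ε| ≤ C ε |θ|^ε`, where `(1-e^{iθ})^ε` is the principal branch. -/
theorem one_sub_exp_cpow_expansion :
    ∃ C : ℝ, 0 < C ∧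
      ∀ ε : ℝ, ε ∈ Set.Ioo (0 : ℝ) 1 →
        ∀ θ : ℝ, θ ∈ Set.Icc (-Real.pi) Real.pi → θ ≠ 0 →
          |((1 - Complex.exp (Complex.I * θ)) ^ (ε : ℂ)).re -
              |θ| ^ ε * Real.cos (ε * Real.pi / 2)| ≤ C * ε * |θ| ^ (1 + ε) ∧
          |((1 - Complex.exp (Complex.I * θ)) ^ (ε : ℂ)).im| ≤ C * ε * |θ| ^ ε := by
  refine ⟨2, two_pos, fun ε hε θ hθ hθ₀ => ?_⟩
  have h₀ : 0 < |θ| := abs_pos.mpr hθ₀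
  have hπ : |θ| ≤ π := abs_le.mpr hθ
  rw [← re_one_sub_exp_I_mul_abs_cpow, ← abs_im_one_sub_exp_I_mul_abs_cpow]
  exact ⟨abs_re_one_sub_exp_I_mul_cpow_sub_le h₀ hπ hε.1.le hε.2.le,
    abs_im_one_sub_exp_I_mul_cpow_le h₀ hπ hε.1.le⟩
end
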